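/- arXiv:2405.09396 — 2 statements merged into one kernel-verified Lean document; each statement's English description precedes it below -/
import Mathlib

section
/- Any proper binary factorisation (x, y) of a string of O₂ of length greater than 2 with both x and y short admits a balanced decomposition: there exist factorisations x = x₁x₂ and y = y₁y₂ (with at most one of x₂, y₂ possibly empty but x₁, y₁ nonempty) such that the factors can be partitioned into two groups, each nonempty and each concatenating to a balanced string of length strictly less than |xy|. -/
/-- A letter of the alphabet Σₙ: the `i`-th pair, with `true` for `aᵢ`
and `false` for its conjugate `āᵢ`. -/
abbrev Letter (n : ℕ) := Fin n × Bool

/-- A string (word) over Σₙ. -/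
abbrev Word (n : ℕ) := List (Letter n)

/-- The conjugate letter. -/
def conj {n : ℕ} (x : Letter n) : Letter n := (x.1, !x.2)

/-- The balance map μ : Σₙ* → ℤⁿ. -/
def mu {n : ℕ} (w : Word n) : Fin n → ℤ :=
  fun i => (w.count ((i, true) : Letter n) : ℤ) - (w.count ((i, false) : Letter n) : ℤ)

/-- The n-balanced language Oₙ. -/
def OO (n : ℕ) : Set (Word n) :=
  {w | ∀ i : Fin n, w.count ((i, true) : Letter n) = w.count ((i, false) : Letter n)}

/-- A string is short if no conjugate pair of letters both occur in it. -/
def Short {n : ℕ} (w : Word n) : Prop :=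
  ∀ i : Fin n, ¬ (((i, true) : Letter n) ∈ w ∧ ((i, false) : Letter n) ∈ w)

/-- The factor of `p` with indices from `i` to `j` (inclusive). -/
def factor {n : ℕ} (p : Word n) (i j : ℕ) : Word n :=
  (p.drop i).take (j + 1 - i)

/-- `[i, j]` is a bump of `p`: the factor `p[i..j]` is a minimal non-short factor,
i.e. it is not short but all of its ultra-proper factors are short. -/
def IsBump {n : ℕ} (p : Word n) (i j : ℕ) : Prop :=
  i < j ∧ j < p.length ∧ ¬ Short (factor p i j) ∧
    ∀ u l r : Word n, factor p i j = l ++ u ++ r → u ≠ [] → u ≠ factor p i j → Short u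

/-- Bal-decomposition of a pair `(z₀, z₁)`: choose proper factorisations of `z₀` and `z₁`,
and partition all resulting factors into two nonempty lists of length at most 2, each
concatenating to a string of O₂ of length strictly less than `|z₀z₁|`. -/
def BalDecomp (z₀ z₁ : Word 2) : Prop :=
  ∃ f₀ f₁ P Q : List (Word 2),
    f₀.flatten = z₀ ∧ [] ∉ f₀ ∧ f₁.flatten = z₁ ∧ [] ∉ f₁ ∧
    (P ++ Q).Perm (f₀ ++ f₁) ∧
    0 < P.length ∧ P.length ≤ 2 ∧ 0 < Q.length ∧ Q.length ≤ 2 ∧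
    P.flatten.length < z₀.length + z₁.length ∧ Q.flatten.length < z₀.length + z₁.length ∧
    P.flatten ∈ OO 2 ∧ Q.flatten ∈ OO 2

/-! If `x` and `y` are short and `xy` is balanced, then for every index `i` the letters of
index `i` in `x` all carry one orientation and those in `y` the opposite one, and `x`, `y`
contain equally many letters of each index. So a factor `u` of `x` followed by an equally long
factor `v` of `y` is balanced as soon as `u` and `v` contain equally many letters of the index
`i` of the first letter of `x`. The difference `A t` of these numbers for the prefixes of
length `t` of `x` and `y` satisfies `A 1 ≥ 0` and decreases by at most one per step. If
`A (|x| - 1) ≤ 0`, it vanishes at some `0 < t < |x|` and the prefixes of length `t` give the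
decomposition; otherwise the last letter of `y` has index `i`, and it forms a balanced pair with
the first letter of `x`. -/

lemma exists_mem_Icc_eq_zero_of_sub_one_le (A : ℕ → ℤ) (hstep : ∀ t, A t - 1 ≤ A (t + 1))
    {a b : ℕ} (hab : a ≤ b) (ha : 0 ≤ A a) (hb : A b ≤ 0) : ∃ t ∈ Set.Icc a b, A t = 0 := by
  induction b, hab using Nat.le_induction with
  | base => exact ⟨a, ⟨le_rfl, le_rfl⟩, le_antisymm hb ha⟩
  | succ b hab ih =>
    by_cases hAb : A b ≤ 0
    · obtain ⟨t, ⟨hat, htb⟩, ht⟩ := ih hAb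
      exact ⟨t, ⟨hat, htb.trans b.le_succ⟩, ht⟩
    · exact ⟨b + 1, ⟨by omega, le_rfl⟩, by linarith [hstep b]⟩

lemma countP_take_le_countP_take_succ {α : Type*} (p : α → Bool) (w : List α) (t : ℕ) :
    (w.take t).countP p ≤ (w.take (t + 1)).countP p := by
  rw [List.take_add_one, List.countP_append]
  omega

lemma countP_take_succ_le {α : Type*} (p : α → Bool) (w : List α) (t : ℕ) :
    (w.take (t + 1)).countP p ≤ (w.take t).countP p + 1 := by
  rw [List.take_add_one, List.countP_append]
  have : w[t]?.toList.length ≤ 1 := by cases w[t]? <;> simp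
  linarith [List.countP_le_length (p := p) (l := w[t]?.toList)]

section Oriented

variable {n : ℕ}

lemma mem_OO_of_mem_OO_append {u v : Word n} (hu : u ∈ OO n) (huv : u ++ v ∈ OO n) :
    v ∈ OO n := fun i => by
  have hu_i := hu i
  have huv_i := huv i
  simp only [List.count_append] at huv_i
  omega

lemma List.Perm.mem_OO_iff {u v : Word n} (h : u.Perm v) : u ∈ OO n ↔ v ∈ OO n := by
  simp only [OO, Set.mem_ofPred_eq, h.count_eq]

lemma mem_of_mem_OO {w : Word n} (hw : w ∈ OO n) {i : Fin n} {b : Bool} (h : (i, b) ∈ w) :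
    (i, !b) ∈ w := by
  rw [← List.count_pos_iff] at h ⊢
  cases b
  · simpa [hw i] using h
  · simpa [← hw i] using h

lemma Short.not_mem_of_mem {w : Word n} (hw : Short w) {i : Fin n} {b : Bool}
    (h : (i, b) ∈ w) : (i, !b) ∉ w := by
  cases b
  exacts [fun h' => hw i ⟨h', h⟩, fun h' => hw i ⟨h, h'⟩]

lemma Short.not_mem_right_of_mem_left {x y : Word n} (hx : Short x) (hy : Short y)
    (hxy : x ++ y ∈ OO n) {l : Letter n} (hl : l ∈ x) : l ∉ y := by
  intro hly
  obtain ⟨i, b⟩ := l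
  rcases List.mem_append.1 (mem_of_mem_OO hxy (List.mem_append_right x hly)) with h | h
  exacts [hx.not_mem_of_mem hl h, hy.not_mem_of_mem hly h]

def Oriented (s : Fin n → Bool) (w : Word n) : Prop :=
  ∀ l ∈ w, l.2 = s l.1

lemma Oriented.mono {s : Fin n → Bool} {w w' : Word n} (h : Oriented s w) (h' : w' ⊆ w) :
    Oriented s w' :=
  fun l hl => h l (h' hl)

lemma Oriented.count_eq {s : Fin n → Bool} {w : Word n} (h : Oriented s w) (i : Fin n)
    (b : Bool) : w.count (i, b) = if s i = b then w.countP (·.1 = i) else 0 := by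
  rw [List.count_eq_countP]
  split_ifs with hb
  · refine List.countP_congr fun l hl => ?_
    have hl2 := h l hl
    obtain ⟨j, c⟩ := l
    simp only at hl2
    subst hl2
    simp only [beq_iff_eq, Prod.mk.injEq, decide_eq_true_eq]
    constructor
    · exact And.left
    · rintro rfl
      exact ⟨rfl, hb⟩
  · refine List.countP_eq_zero.2 fun l hl hlb => hb ?_
    obtain rfl := beq_iff_eq.1 hlb
    exact (h _ hl).symm

lemma Oriented.append_mem_OO_iff {s : Fin n → Bool} {u v : Word n} (hu : Oriented s u)
    (hv : Oriented (!s ·) v) :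
    u ++ v ∈ OO n ↔ ∀ i, u.countP (·.1 = i) = v.countP (·.1 = i) := by
  simp only [OO, Set.mem_ofPred_eq, List.count_append, hu.count_eq, hv.count_eq]
  refine forall_congr' fun i => ?_
  cases s i <;> simp [eq_comm]

lemma exists_oriented_of_short {x y : Word n} (hx : Short x) (hy : Short y)
    (hxy : x ++ y ∈ OO n) : ∃ s, Oriented s x ∧ Oriented (!s ·) y := by
  refine ⟨fun i => decide ((i, true) ∈ x ∨ (i, false) ∈ y), ?_, ?_⟩
  · rintro ⟨i, (_ | _)⟩ hl
    · simpa using ⟨hx.not_mem_of_mem hl, hx.not_mem_right_of_mem_left hy hxy hl⟩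
    · simp [hl]
  · rintro ⟨i, (_ | _)⟩ hl
    · simp [hl]
    · simpa using ⟨fun h => hx.not_mem_right_of_mem_left hy hxy h hl, hy.not_mem_of_mem hl⟩

end Oriented

lemma length_eq_countP_fst_add {i j : Fin 2} (hij : i ≠ j) (w : Word 2) :
    w.length = w.countP (·.1 = i) + w.countP (·.1 = j) := by
  rw [List.length_eq_countP_add_countP (·.1 = i)]
  congr 1
  refine List.countP_congr fun l _ => ?_
  simp only [decide_eq_true_eq]
  omega

lemma length_eq_of_countP_fst_eq {u v : Word 2}
    (h : ∀ i, u.countP (·.1 = i) = v.countP (·.1 = i)) : u.length = v.length := by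
  rw [length_eq_countP_fst_add Fin.zero_ne_one, length_eq_countP_fst_add Fin.zero_ne_one, h, h]

lemma countP_fst_eq_of_length_eq {u v : Word 2} (hlen : u.length = v.length) {j : Fin 2}
    (h : u.countP (·.1 = j) = v.countP (·.1 = j)) (i : Fin 2) :
    u.countP (·.1 = i) = v.countP (·.1 = i) := by
  rcases eq_or_ne i j with rfl | hij
  · exact h
  · have hu := length_eq_countP_fst_add hij u
    have hv := length_eq_countP_fst_add hij v
    omega

lemma Oriented.append_mem_OO_two {s : Fin 2 → Bool} {u v : Word 2} (hu : Oriented s u)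
    (hv : Oriented (!s ·) v) (hlen : u.length = v.length) {j : Fin 2}
    (h : u.countP (·.1 = j) = v.countP (·.1 = j)) : u ++ v ∈ OO 2 :=
  (hu.append_mem_OO_iff hv).2 (countP_fst_eq_of_length_eq hlen h)

lemma exists_split_mem_OO {s : Fin 2 → Bool} {x y : Word 2} (hx : Oriented s x)
    (hy : Oriented (!s ·) y) (hcount : ∀ i, x.countP (·.1 = i) = y.countP (·.1 = i))
    (hlen : 2 ≤ x.length) :
    (∃ t, 0 < t ∧ t < x.length ∧ x.take t ++ y.take t ∈ OO 2) ∨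
      x.take 1 ++ y.drop (x.length - 1) ∈ OO 2 := by
  have hxy := length_eq_of_countP_fst_eq hcount
  obtain ⟨c, xt, rfl⟩ := List.exists_cons_of_ne_nil (List.ne_nil_of_length_pos (l := x) (by omega))
  simp only [List.length_cons] at hxy hlen ⊢
  have hc : ((c :: xt).take 1).countP (·.1 = c.1) = 1 := by simp
  set A : ℕ → ℤ := fun t =>
    ((c :: xt).take t).countP (·.1 = c.1) - (y.take t).countP (·.1 = c.1) with hA
  by_cases hAL : A xt.length ≤ 0
  · left
    have hA1 : 0 ≤ A 1 := by
      have : (y.take 1).length ≤ 1 := by simp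
      have := List.countP_le_length (p := (·.1 = c.1)) (l := y.take 1)
      simp only [hA, hc]
      omega
    have hstep (t : ℕ) : A t - 1 ≤ A (t + 1) := by
      have := countP_take_le_countP_take_succ (·.1 = c.1) (c :: xt) t
      have := countP_take_succ_le (·.1 = c.1) y t
      simp only [hA]
      omega
    obtain ⟨t, ⟨ht1, htL⟩, ht⟩ :=
      exists_mem_Icc_eq_zero_of_sub_one_le A hstep (by omega) hA1 hAL
    simp only [hA] at ht
    refine ⟨t, by omega, by omega, ?_⟩
    exact (hx.mono (List.take_subset _ _)).append_mem_OO_two (hy.mono (List.take_subset _ _))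
      (by simp; omega) (j := c.1) (by omega)
  · right
    have hsplit_x := congrArg (List.countP (·.1 = c.1)) (List.take_append_drop xt.length (c :: xt))
    have hsplit_y := congrArg (List.countP (·.1 = c.1)) (List.take_append_drop xt.length y)
    have hlast : (y.drop xt.length).length = 1 := by simp; omega
    have := List.countP_le_length (p := (·.1 = c.1)) (l := y.drop xt.length)
    have := hcount c.1
    simp only [List.countP_append] at hsplit_x hsplit_y
    simp only [hA, not_le] at hAL
    refine (hx.mono (List.take_subset _ _)).append_mem_OO_two (hy.mono (List.drop_subset _ _))
      (by simp [hlast]) (j := c.1) ?_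
    simp only [Nat.add_sub_cancel]
    omega

lemma balDecomp_of_mem_OO {x y x₁ x₂ y₁ y₂ v w : Word 2} (hx : x₁ ++ x₂ = x)
    (hy : y₁ ++ y₂ = y) (hx₁ : x₁ ≠ []) (hx₂ : x₂ ≠ []) (hy₁ : y₁ ≠ []) (hy₂ : y₂ ≠ [])
    (hvw : [v, w].Perm [y₁, y₂]) (hxy : x ++ y ∈ OO 2) (hP : x₁ ++ v ∈ OO 2) :
    BalDecomp x y := by
  subst hx hy
  have hperm : ([x₁, v] ++ [x₂, w]).Perm ([x₁, x₂] ++ [y₁, y₂]) :=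
    ((List.Perm.swap x₂ v [w]).trans (hvw.cons x₂)).cons x₁
  have hw : w ≠ [] := by
    rcases List.mem_pair.1 (hvw.subset (by simp : w ∈ [v, w])) with rfl | rfl <;> assumption
  have hlen : v.length + w.length = y₁.length + y₂.length := by
    simpa using hvw.flatten.length_eq
  have hQ : x₂ ++ w ∈ OO 2 := by
    refine mem_OO_of_mem_OO_append hP ((List.Perm.mem_OO_iff ?_).2 hxy)
    simpa using hperm.flatten
  refine ⟨[x₁, x₂], [y₁, y₂], [x₁, v], [x₂, w], by simp, by simp [hx₁.symm, hx₂.symm],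
    by simp, by simp [hy₁.symm, hy₂.symm], hperm, by simp, by simp, by simp, by simp,
    ?_, ?_, by simpa using hP, by simpa using hQ⟩
  · simp only [List.flatten_cons, List.flatten_nil, List.append_nil, List.length_append]
    have := List.length_pos_iff.2 hx₂
    have := List.length_pos_iff.2 hw
    omega
  · simp only [List.flatten_cons, List.flatten_nil, List.append_nil, List.length_append]
    have := List.length_pos_iff.2 hx₁
    have := List.length_pos_iff.2 hy₁
    have := List.length_pos_iff.2 hy₂
    omega

theorem stmt_12 (x y : Word 2) (hx : x ≠ []) (hy : y ≠ [])
    (hbal : x ++ y ∈ OO 2) (hlen : 2 < (x ++ y).length)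
    (hsx : Short x) (hsy : Short y) :
    BalDecomp x y := by
  obtain ⟨s, hxs, hys⟩ := exists_oriented_of_short hsx hsy hbal
  have hcount := (hxs.append_mem_OO_iff hys).1 hbal
  have hxy := length_eq_of_countP_fst_eq hcount
  rw [List.length_append] at hlen
  rcases exists_split_mem_OO hxs hys hcount (by omega) with ⟨t, ht0, htx, hP⟩ | hP
  · exact balDecomp_of_mem_OO (List.take_append_drop t x) (List.take_append_drop t y)
      (by simp [hx]; omega) (by simp; omega) (by simp [hy]; omega) (by simp; omega)
      (List.Perm.refl _) hbal hP
  · exact balDecomp_of_mem_OO (List.take_append_drop 1 x)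
      (List.take_append_drop (x.length - 1) y) (by simp [hx])
      (List.ne_nil_of_length_pos (by simp; omega))
      (by simp [hy]; omega) (by simp; omega) (List.Perm.swap _ _ _) hbal hP
end

section
/- If a minimal-length counterexample (q₀, q₁) to bal-decomposability exists (q₀q₁ ∈ O₂, |q₀q₁| > 2, q₀, q₁ nonempty, no bal-decomposition, and |q₀q₁| minimal among such pairs), then not both q₀ and q₁ are short; i.e. at least one of q₀, q₁ contains a bump. -/
/-!
If `q₀` and `q₁` are short and `q₀q₁` is balanced, no letter occurs in both, so for some choice
of signs `s` we have `q₀ = σ(a)` and `q₁ = σ̄(b)`, where `σ i = (i, s i)`, `σ̄ = conj ∘ σ`, and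
`a, b` are words over the pair indices `{0, 1}`. A word `σ(u) σ̄(v)` is balanced iff `u ~ v`, so
a bal-decomposition comes from proper splits `a = a₁a₂`, `b = b₁b₂` with `a₁ ~ b₁` or `a₁ ~ b₂`.
If no two proper prefixes of `a` and `b` of equal length are permutations of each other, the
difference `f m` of the numbers of `0`s in the prefixes of length `m` vanishes nowhere on
`(0, |a|)`. It moves by steps of at most one, so by the discrete intermediate value theorem
`f 1` and `f (|a| - 1)` have the same sign. Were the last letter of `a` different from the first
of `b` and the first of `a` different from the last of `b`, we would have
`f (|a| - 1) = - f 1`; hence one of these letters pairs off with the other.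
-/

open List

section Balance

variable {n : ℕ}

theorem mem_OO_iff_count_conj {w : Word n} :
    w ∈ OO n ↔ ∀ x : Letter n, w.count x = w.count (conj x) := by
  refine ⟨fun h ⟨i, b⟩ => ?_, fun h i => h (i, true)⟩
  cases b
  · exact (h i).symm
  · exact h i

theorem Short.conj_not_mem {w : Word n} (h : Short w) {x : Letter n} (hx : x ∈ w) :
    conj x ∉ w := by
  obtain ⟨i, _ | _⟩ := x
  · exact fun h' => h i ⟨h', hx⟩
  · exact fun h' => h i ⟨hx, h'⟩

theorem Short.disjoint_of_append_mem_OO {q₀ q₁ : Word n} (h₀ : Short q₀) (h₁ : Short q₁)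
    (hq : q₀ ++ q₁ ∈ OO n) : q₀.Disjoint q₁ := by
  intro x hx₀ hx₁
  have hconj : (q₀ ++ q₁).count (conj x) = 0 :=
    count_eq_zero.2 (by simp [h₀.conj_not_mem hx₀, h₁.conj_not_mem hx₁])
  have hx : 0 < (q₀ ++ q₁).count x := count_pos_iff.2 (mem_append_left _ hx₀)
  have := mem_OO_iff_count_conj.1 hq x
  omega

def signed (s : Fin n → Bool) (i : Fin n) : Letter n := (i, s i)

theorem exists_signed_of_short {q₀ q₁ : Word n} (h₀ : Short q₀) (h₁ : Short q₁)
    (hq : q₀ ++ q₁ ∈ OO n) :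
    ∃ (s : Fin n → Bool) (a₀ a₁ : List (Fin n)),
      q₀ = a₀.map (signed s) ∧ q₁ = a₁.map (conj ∘ signed s) := by
  have hdisj := h₀.disjoint_of_append_mem_OO h₁ hq
  refine ⟨fun i => decide ((i, true) ∈ q₀ ∨ (i, false) ∈ q₁), q₀.map Prod.fst, q₁.map Prod.fst,
    ?_, ?_⟩
  · rw [map_map]
    conv_lhs => rw [← map_id q₀]
    refine map_congr_left fun ⟨i, b⟩ hx => ?_
    cases b
    · have : (i, true) ∉ q₀ := h₀.conj_not_mem hx
      simp [signed, this, show (i, false) ∉ q₁ from hdisj hx]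
    · simp [signed, hx]
  · rw [map_map]
    conv_lhs => rw [← map_id q₁]
    refine map_congr_left fun ⟨i, b⟩ hx => ?_
    cases b
    · simp [signed, conj, hx]
    · have : (i, false) ∉ q₁ := h₁.conj_not_mem hx
      simp [signed, conj, this, show (i, true) ∉ q₀ from fun h => hdisj h hx]

theorem mem_OO_iff_signed (s : Fin n → Bool) {w : Word n} :
    w ∈ OO n ↔ ∀ i, w.count (signed s i) = w.count (conj (signed s i)) := by
  refine ⟨fun h i => mem_OO_iff_count_conj.1 h _, fun h i => ?_⟩
  have := h i
  cases hs : s i <;> simp_all [signed, conj]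

theorem map_signed_append_map_conj_mem_OO_iff {s : Fin n → Bool} {a b : List (Fin n)} :
    a.map (signed s) ++ b.map (conj ∘ signed s) ∈ OO n ↔ a ~ b := by
  have hinj : (signed s).Injective := fun i j h => congrArg Prod.fst h
  have hinj' : (conj ∘ signed s).Injective := fun i j h => congrArg Prod.fst h
  have h₁ : ∀ i, (b.map (conj ∘ signed s)).count (signed s i) = 0 := fun i =>
    count_eq_zero.2 (by simp [signed, conj])
  have h₂ : ∀ i, (a.map (signed s)).count (conj (signed s i)) = 0 := fun i =>
    count_eq_zero.2 (by simp [signed, conj])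
  rw [mem_OO_iff_signed s, perm_iff_count]
  refine forall_congr' fun i => ?_
  rw [count_append, count_append, h₁, h₂, count_map_of_injective _ _ hinj,
    ← Function.comp_apply (f := conj) (g := signed s), count_map_of_injective _ _ hinj']
  simp

end Balance

theorem exists_eq_zero_of_natAbs_sub_le_one {f : ℕ → ℤ}
    (hf : ∀ k, (f (k + 1) - f k).natAbs ≤ 1) {i j : ℕ} (hij : i ≤ j) (hi : f i ≤ 0)
    (hj : 0 ≤ f j) : ∃ k, i ≤ k ∧ k ≤ j ∧ f k = 0 := by
  induction j, hij using Nat.le_induction with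
  | base => exact ⟨i, le_rfl, le_rfl, le_antisymm hi hj⟩
  | succ j hij ih =>
    by_cases h : 0 ≤ f j
    · obtain ⟨k, hik, hkj, hk⟩ := ih h
      exact ⟨k, hik, hkj.trans j.le_succ, hk⟩
    · have := hf j
      exact ⟨j + 1, hij.trans j.le_succ, le_rfl, by omega⟩

theorem exists_eq_zero_of_natAbs_sub_le_one_of_mul_nonpos {f : ℕ → ℤ}
    (hf : ∀ k, (f (k + 1) - f k).natAbs ≤ 1) {i j : ℕ} (hij : i ≤ j) (h : f i * f j ≤ 0) :
    ∃ k, i ≤ k ∧ k ≤ j ∧ f k = 0 := by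
  rcases lt_trichotomy (f i) 0 with hi | hi | hi
  · exact exists_eq_zero_of_natAbs_sub_le_one hf hij hi.le (nonneg_of_mul_nonpos_right h hi)
  · exact ⟨i, le_rfl, hij, hi⟩
  · obtain ⟨k, hik, hkj, hk⟩ := exists_eq_zero_of_natAbs_sub_le_one (f := fun m => -f m)
      (fun k => by rw [← Int.natAbs_neg, neg_sub, sub_neg_eq_add, neg_add_eq_sub]; exact hf k)
      hij (by simpa using hi.le)
      (by simpa using nonpos_of_mul_nonpos_right h hi)
    exact ⟨k, hik, hkj, by simpa using hk⟩

namespace List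

theorem count_zero_add_count_one (l : List (Fin 2)) : l.count 0 + l.count 1 = l.length := by
  induction l with
  | nil => rfl
  | cons x l ih => fin_cases x <;> simp <;> omega

theorem perm_of_length_eq_of_count_zero_eq {a b : List (Fin 2)} (hl : a.length = b.length)
    (h : a.count 0 = b.count 0) : a ~ b := by
  rw [perm_iff_count]
  intro i
  fin_cases i
  · exact h
  · have := a.count_zero_add_count_one
    have := b.count_zero_add_count_one
    simp only [Fin.mk_one]
    omega

theorem count_take_add_one_le {α : Type*} [BEq α] (x : α) (l : List α) (k : ℕ) :
    (l.take (k + 1)).count x ≤ (l.take k).count x + 1 := by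
  rw [take_add_one, count_append]
  have : l[k]?.toList.count x ≤ 1 := count_le_length.trans (by cases l[k]? <;> simp)
  omega

end List

theorem exists_take_perm_take {a b : List (Fin 2)} (hab : a ~ b) (ha : 2 ≤ a.length)
    (h₁ : a.head? ≠ b.getLast?) (h₂ : a.getLast? ≠ b.head?) :
    ∃ m, 0 < m ∧ m < a.length ∧ a.take m ~ b.take m := by
  by_contra! hnot
  have hlen := hab.length_eq
  obtain ⟨f, hf⟩ : ∃ f : ℕ → ℤ, ∀ m, f m = ((a.take m).count 0 : ℤ) - (b.take m).count 0 :=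
    ⟨_, fun _ => rfl⟩
  have hf_step : ∀ k, (f (k + 1) - f k).natAbs ≤ 1 := by
    intro k
    have := count_take_add_one_le 0 a k
    have := count_take_add_one_le 0 b k
    have := (take_sublist_take_left (l := a) (Nat.le_add_right k 1)).count_le 0
    have := (take_sublist_take_left (l := b) (Nat.le_add_right k 1)).count_le 0
    rw [hf, hf]
    omega
  have hf_ne : ∀ m, 0 < m → m < a.length → f m ≠ 0 := fun m hm hma hfm =>
    hnot m hm hma (perm_of_length_eq_of_count_zero_eq (by simp [hlen])
      (by rw [hf] at hfm; omega))
  have ha₀ : a ≠ [] := ne_nil_of_length_pos (by omega)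
  have hb₀ : b ≠ [] := ne_nil_of_length_pos (by omega)
  obtain ⟨x, a', ha_cons⟩ := exists_cons_of_ne_nil ha₀
  obtain ⟨y, b', hb_cons⟩ := exists_cons_of_ne_nil hb₀
  obtain ⟨a'', x', ha_last⟩ := (eq_nil_or_concat' a).resolve_left ha₀
  obtain ⟨b'', y', hb_last⟩ := (eq_nil_or_concat' b).resolve_left hb₀
  have hLa : a.length = a''.length + 1 := by simp [ha_last]
  have hLb : b.length = b''.length + 1 := by simp [hb_last]
  have hxy' : x ≠ y' := by simpa [ha_cons, hb_last] using h₁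
  have hx'y : x' ≠ y := by simpa [ha_last, hb_cons] using h₂
  have hpair : ∀ u v : Fin 2, u ≠ v → [u].count 0 + [v].count 0 = 1 := by decide
  have hfirst : f 1 = ([x].count 0 : ℤ) - [y].count 0 := by rw [hf, ha_cons, hb_cons]; simp
  have hlast : f a''.length = -f 1 := by
    have hcount := hab.count_eq 0
    have hb'' : b''.length = a''.length := by omega
    rw [ha_last, hb_last, count_append, count_append] at hcount
    have := hpair x' y hx'y
    have := hpair x y' hxy'
    rw [hfirst, hf, ha_last, hb_last, take_left, take_left' hb'']
    omega
  obtain ⟨k, hk₁, hk, hfk⟩ := exists_eq_zero_of_natAbs_sub_le_one_of_mul_nonpos hf_step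
    (i := 1) (j := a''.length) (by omega)
    (by rw [hlast, mul_neg, neg_nonpos]; exact mul_self_nonneg _)
  exact hf_ne k hk₁ (by omega) hfk

theorem exists_split_perm {a b : List (Fin 2)} (hab : a ~ b) (ha : 2 ≤ a.length) :
    ∃ a₁ a₂ b₁ b₂, a = a₁ ++ a₂ ∧ b = b₁ ++ b₂ ∧ a₁ ≠ [] ∧ a₂ ≠ [] ∧ (a₁ ~ b₁ ∨ a₁ ~ b₂) := by
  have ha₀ : a ≠ [] := ne_nil_of_length_pos (by omega)
  have hb₀ : b ≠ [] := ne_nil_of_length_pos (by rw [← hab.length_eq]; omega)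
  by_cases h₂ : a.getLast? = b.head?
  · obtain ⟨a', x, rfl⟩ := (eq_nil_or_concat' a).resolve_left ha₀
    obtain ⟨y, b', rfl⟩ := exists_cons_of_ne_nil hb₀
    obtain rfl : x = y := by simpa using h₂
    refine ⟨a', [x], [x], b', rfl, rfl, ne_nil_of_length_pos (by simp at ha; omega),
      cons_ne_nil _ _, Or.inr ?_⟩
    exact (perm_cons x).1 ((perm_append_singleton x a').symm.trans hab)
  by_cases h₁ : a.head? = b.getLast?
  · obtain ⟨x, a', rfl⟩ := exists_cons_of_ne_nil ha₀
    obtain ⟨b', y, rfl⟩ := (eq_nil_or_concat' b).resolve_left hb₀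
    obtain rfl : x = y := by simpa using h₁
    exact ⟨[x], a', b', [x], rfl, rfl, cons_ne_nil _ _,
      ne_nil_of_length_pos (by simp at ha; omega), Or.inr (Perm.refl _)⟩
  obtain ⟨m, hm, hma, hperm⟩ := exists_take_perm_take hab ha h₁ h₂
  exact ⟨a.take m, a.drop m, b.take m, b.drop m, (take_append_drop m a).symm,
    (take_append_drop m b).symm, ne_nil_of_length_pos (by simp; omega),
    ne_nil_of_length_pos (by simp; omega), Or.inl hperm⟩

theorem BalDecomp.of_pieces {z₀ z₁ : Word 2} {f₀ f₁ P Q : List (Word 2)}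
    (hf₀ : f₀.flatten = z₀) (hf₁ : f₁.flatten = z₁) (hperm : (P ++ Q) ~ (f₀ ++ f₁))
    (hP : P.length ≤ 2) (hQ : Q.length ≤ 2) (hPne : P.flatten ≠ []) (hQne : Q.flatten ≠ [])
    (hPbal : P.flatten ∈ OO 2) (hQbal : Q.flatten ∈ OO 2) : BalDecomp z₀ z₁ := by
  have hsum : P.flatten.length + Q.flatten.length = z₀.length + z₁.length := by
    simpa [← hf₀, ← hf₁] using hperm.flatten.length_eq
  have hPlen := length_pos_of_ne_nil hPne
  have hQlen := length_pos_of_ne_nil hQne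
  -- empty pieces are discarded; this changes no concatenation
  let prune : List (Word 2) → List (Word 2) := filter fun w => !w.isEmpty
  have hprune : ∀ L, (prune L).flatten = L.flatten := fun _ => flatten_filter_not_isEmpty
  have hnil : ∀ L, [] ∉ prune L := fun _ => by simp [prune]
  have hpos : ∀ L, L.flatten ≠ [] → 0 < (prune L).length := fun L hL =>
    length_pos_of_ne_nil fun h => hL (by rw [← hprune, h, flatten_nil])
  refine ⟨prune f₀, prune f₁, prune P, prune Q, (hprune f₀).trans hf₀, hnil f₀,
    (hprune f₁).trans hf₁, hnil f₁, ?_, hpos P hPne, (length_filter_le _ _).trans hP,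
    hpos Q hQne, (length_filter_le _ _).trans hQ, ?_, ?_, ?_, ?_⟩
  · simpa [prune, filter_append] using hperm.filter (fun w => !w.isEmpty)
  · rw [hprune]; omega
  · rw [hprune]; omega
  · rwa [hprune]
  · rwa [hprune]

theorem balDecomp_map_signed {s : Fin 2 → Bool} {a₁ a₂ b₁ b₂ c₁ c₂ : List (Fin 2)}
    (hc : [c₁, c₂] ~ [b₁, b₂]) (h₁ : a₁ ~ c₁) (h₂ : a₂ ~ c₂) (ha₁ : a₁ ≠ []) (ha₂ : a₂ ≠ []) :
    BalDecomp ((a₁ ++ a₂).map (signed s)) ((b₁ ++ b₂).map (conj ∘ signed s)) := by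
  refine BalDecomp.of_pieces (f₀ := [a₁.map (signed s), a₂.map (signed s)])
    (f₁ := [b₁.map (conj ∘ signed s), b₂.map (conj ∘ signed s)])
    (P := [a₁.map (signed s), c₁.map (conj ∘ signed s)])
    (Q := [a₂.map (signed s), c₂.map (conj ∘ signed s)]) (by simp) (by simp) ?_ le_rfl le_rfl
    (by simp [ha₁]) (by simp [ha₂]) (by simpa using map_signed_append_map_conj_mem_OO_iff.2 h₁)
    (by simpa using map_signed_append_map_conj_mem_OO_iff.2 h₂)
  exact (Perm.cons _ (Perm.swap _ _ _)).trans ((hc.map _).append_left [_, _])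

theorem balDecomp_of_short {q₀ q₁ : Word 2} (h₀ : Short q₀) (h₁ : Short q₁)
    (hq : q₀ ++ q₁ ∈ OO 2) (hlen : 2 < (q₀ ++ q₁).length) : BalDecomp q₀ q₁ := by
  obtain ⟨s, a, b, rfl, rfl⟩ := exists_signed_of_short h₀ h₁ hq
  have hab : a ~ b := map_signed_append_map_conj_mem_OO_iff.1 hq
  have ha : 2 ≤ a.length := by
    have := hab.length_eq
    simp only [length_append, length_map] at hlen
    omega
  obtain ⟨a₁, a₂, b₁, b₂, rfl, rfl, ha₁, ha₂, h | h⟩ := exists_split_perm hab ha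
  · exact balDecomp_map_signed (Perm.refl _) h
      ((perm_append_left_iff a₁).1 (hab.trans (h.symm.append_right b₂))) ha₁ ha₂
  · exact balDecomp_map_signed (Perm.swap _ _ _) h
      ((perm_append_left_iff a₁).1 (hab.trans (perm_append_comm.trans (h.symm.append_right b₁))))
      ha₁ ha₂

theorem stmt_17_general (q₀ q₁ : Word 2)
    (hbal : q₀ ++ q₁ ∈ OO 2) (hlen : 2 < (q₀ ++ q₁).length)
    (hnd : ¬ BalDecomp q₀ q₁) :
    ¬ (Short q₀ ∧ Short q₁) :=
  fun ⟨h₀, h₁⟩ => hnd (balDecomp_of_short h₀ h₁ hbal hlen)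

theorem stmt_17 (q₀ q₁ : Word 2) (h₀ : q₀ ≠ []) (h₁ : q₁ ≠ [])
    (hbal : q₀ ++ q₁ ∈ OO 2) (hlen : 2 < (q₀ ++ q₁).length)
    (hnd : ¬ BalDecomp q₀ q₁)
    (hmin : ∀ p₀ p₁ : Word 2, p₀ ≠ [] → p₁ ≠ [] → p₀ ++ p₁ ∈ OO 2 →
      2 < (p₀ ++ p₁).length → (p₀ ++ p₁).length < (q₀ ++ q₁).length →
      BalDecomp p₀ p₁) :
    ¬ (Short q₀ ∧ Short q₁) :=
  stmt_17_general q₀ q₁ hbal hlen hnd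
end
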